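/- Let n be a positive natural number and let m ≤ n and d be natural numbers. Summing over all d-tuples (A_1, …, A_d) of m-element subsets of Fin n, one has ∑_{(A_1,…,A_d)} (n − |A_1 ∪ ⋯ ∪ A_d|) = n · C(n−1, m)^d, where |·| denotes cardinality and C(n−1, m) is the binomial coefficient. -/

import Mathlib

/-! Double counting: `n - |A₁ ∪ ⋯ ∪ A_d|` counts the points `x` lying in no `Aᵢ`, so the sum
counts pairs `(A, x)` with `x ∉ Aᵢ` for all `i`. For a fixed `x` such tuples are exactly the
`d`-tuples of `m`-subsets of the `n - 1` points other than `x`, of which there are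
`C(n - 1, m)^d`. -/

open Finset

section

variable {ι α : Type*} [Fintype ι] [Fintype α]

lemma card_sub_card_biUnion [DecidableEq α] (A : ι → Finset α) :
    Fintype.card α - #(univ.biUnion A) = #{x | ∀ i, x ∉ A i} := by
  rw [← card_compl]
  congr 1
  ext x
  simp

lemma filter_forall_card_eq [DecidableEq ι] (m : ℕ) :
    ({A | ∀ i, #(A i) = m} : Finset (ι → Finset α)) =
      Fintype.piFinset fun _ => powersetCard m univ := by
  ext A
  simp [mem_powersetCard]

lemma card_piFinset_powersetCard_filter_forall_not_mem [DecidableEq ι] [DecidableEq α]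
    (m : ℕ) (x : α) :
    #{A ∈ Fintype.piFinset (fun _ : ι => powersetCard m (univ : Finset α)) | ∀ i, x ∉ A i} =
      (Fintype.card α - 1).choose m ^ Fintype.card ι := by
  have avoiding_x :
      {A ∈ Fintype.piFinset (fun _ : ι => powersetCard m (univ : Finset α)) | ∀ i, x ∉ A i} =
        Fintype.piFinset fun _ => powersetCard m (univ.erase x) := by
    ext A
    simp [mem_powersetCard, subset_erase, forall_and, and_comm]
  rw [avoiding_x, Fintype.card_piFinset, prod_const, card_powersetCard,
    card_erase_of_mem (mem_univ x), card_univ, card_univ]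

theorem sum_card_sub_card_biUnion_piFinset_powersetCard [DecidableEq ι] [DecidableEq α]
    (m : ℕ) :
    ∑ A ∈ Fintype.piFinset (fun _ : ι => powersetCard m (univ : Finset α)),
        (Fintype.card α - #(univ.biUnion A)) =
      Fintype.card α * (Fintype.card α - 1).choose m ^ Fintype.card ι := by
  simp_rw [card_sub_card_biUnion]
  refine (sum_card_bipartiteAbove_eq_sum_card_bipartiteBelow (t := univ)
    (fun (A : ι → Finset α) (x : α) => ∀ i, x ∉ A i)).trans ?_
  simp only [bipartiteBelow, card_piFinset_powersetCard_filter_forall_not_mem, sum_const,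
    card_univ, smul_eq_mul]

end

theorem sum_missing_fragments_general (n m d : ℕ) :
    ∑ A ∈ (Finset.univ : Finset (Fin d → Finset (Fin n))).filter
        (fun A => ∀ i, (A i).card = m),
      (n - (Finset.univ.biUnion A).card) = n * ((n - 1).choose m) ^ d := by
  have h := sum_card_sub_card_biUnion_piFinset_powersetCard (ι := Fin d) (α := Fin n) m
  rw [← filter_forall_card_eq] at h
  -- the two filters differ only in their `Decidable` instances
  convert h using 3 <;> simp

/-- Combinatorial core of Proposition 2: summing `n - |A₁ ∪ ⋯ ∪ A_d|` over all
`d`-tuples of `m`-element subsets of `Fin n` gives `n * ((n-1).choose m)^d`. -/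
theorem sum_missing_fragments (n m d : ℕ) (hn : 0 < n) (hm : m ≤ n) :
    ∑ A ∈ (Finset.univ : Finset (Fin d → Finset (Fin n))).filter
        (fun A => ∀ i, (A i).card = m),
      (n - (Finset.univ.biUnion A).card) = n * ((n - 1).choose m) ^ d :=
  sum_missing_fragments_general n m d
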